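/- (Theorem 2) For all n ∈ ℕ with n ≥ 1 and all x_{1:n} ∈ 𝒳^n such that PTW_d(x_{1:n}) > 0 where d = ⌈log₂ n⌉, the depth-adaptive mixture satisfies −log₂ PTW(x_{1:n}) ≤ −log₂ PTW_d(x_{1:n}) + ⌈log₂ n⌉·(log₂ 3 − 1). -/

import Mathlib

/-- The set `𝒞_d(t)` of binary temporal partitions starting at `t`, represented as
finsets of segments `(a,b)` (each segment identified with the interval `{a,…,b}`). -/
def Cpt : ℕ → ℕ → Finset (Finset (ℕ × ℕ))
  | 0, t => {{(t, t)}}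
  | d + 1, t =>
      insert {(t, t + 2 ^ (d + 1) - 1)}
        ((Cpt d t ×ˢ Cpt d (t + 2 ^ d)).image fun p => p.1 ∪ p.2)

/-- `Γ_d(P)`: the number of nodes of depth less than `d` in the binary partition tree
associated with `P ∈ 𝒞_d(t)`, defined by the recursion `Γ_0(P) = 0`,
`Γ_{d+1}({(t, t+2^{d+1}-1)}) = 1` and `Γ_{d+1}(S₁ ∪ S₂) = Γ_d(S₁) + Γ_d(S₂) + 1`. -/
def Gam : ℕ → ℕ → Finset (ℕ × ℕ) → ℕ
  | 0, _, _ => 0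
  | d + 1, t, P =>
      if P = {(t, t + 2 ^ (d + 1) - 1)} then 1
      else Gam d t (P.filter fun s => s.2 < t + 2 ^ d)
            + Gam d (t + 2 ^ d) (P.filter fun s => t + 2 ^ d ≤ s.1) + 1

/-- The substring `x_{a:min(b,n)}` of the (1-based) sequence `x` of length `n`,
treated as a standalone string; it is the empty string when `a > min(b,n)`. -/
def seg {𝒳 : Type*} (x : ℕ → 𝒳) (n a b : ℕ) : List 𝒳 :=
  (List.range (min b n + 1 - a)).map fun i => x (a + i)

/-- `ρ` is a probabilistic data generating source: `ρ(ε) = 1`,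
`ρ(x_{1:n}) = ∑_{y ∈ 𝒳} ρ(x_{1:n} y)`, and all values lie in `[0,1]`. -/
def IsSource {𝒳 : Type*} [Fintype 𝒳] (ρ : List 𝒳 → ℝ) : Prop :=
  ρ [] = 1 ∧ (∀ l : List 𝒳, ρ l = ∑ y : 𝒳, ρ (l ++ [y])) ∧
    ∀ l : List 𝒳, ρ l ∈ Set.Icc (0 : ℝ) 1

/-- The Partition Tree Weighting mixture
`PTW_d(x_{1:n}) = ∑_{P ∈ 𝒞_d} 2^{-Γ_d(P)} ∏_{(a,b) ∈ P} ρ(x_{a:b})` (for `n ≤ 2^d`). -/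
noncomputable def PTW {𝒳 : Type*} (ρ : List 𝒳 → ℝ) (d : ℕ) (x : ℕ → 𝒳) (n : ℕ) : ℝ :=
  ∑ P ∈ Cpt d 1, (2 : ℝ) ^ (-(Gam d 1 P : ℤ)) * ∏ s ∈ P, ρ (seg x n s.1 s.2)

/-- The depth-adaptive PTW mixture
`PTW(x_{1:n}) := ∏_{i=1}^n PTW_{⌈log₂ i⌉}(x_{1:i}) / PTW_{⌈log₂ i⌉}(x_{1:i-1})`. -/
noncomputable def PTWad {𝒳 : Type*} (ρ : List 𝒳 → ℝ) (x : ℕ → 𝒳) (n : ℕ) : ℝ :=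
  ∏ i ∈ Finset.Icc 1 n,
    PTW ρ (Nat.clog 2 i) x i / PTW ρ (Nat.clog 2 i) x (i - 1)

/-!
When `n ≤ 2^d` the right half of every partition of `{1,…,2^{d+1}}` lies beyond the data and
contributes a factor `1`, so `PTW_{d+1}(x_{1:n}) = ½ ρ(x_{1:n}) + ½ PTW_d(x_{1:n})`; since the
trivial partition alone gives `½ ρ(x_{1:n}) ≤ PTW_d(x_{1:n})`, increasing the depth by one costs at
most a factor `3/2`. In the product defining the depth-adaptive mixture the ratios telescope
between consecutive depth changes, and the depth changes `⌈log₂ n⌉` times, each costing `3/2`: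
hence `PTW(x_{1:n}) ≥ (2/3)^{⌈log₂ n⌉} PTW_{⌈log₂ n⌉}(x_{1:n})`.
-/

open Finset

section Partitions

lemma Cpt_bounds : ∀ {d t : ℕ}, ∀ P ∈ Cpt d t, ∀ s ∈ P, t ≤ s.1 ∧ s.1 ≤ s.2 ∧ s.2 ≤ t + 2 ^ d - 1
  | 0, t, P, hP, s, hs => by
    simp only [Cpt, mem_singleton] at hP
    subst hP
    simp only [mem_singleton] at hs
    subst hs
    simp
  | d + 1, t, P, hP, s, hs => by
    have : 1 ≤ 2 ^ d := Nat.one_le_two_pow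
    have : 2 ^ (d + 1) = 2 ^ d + 2 ^ d := by ring
    simp only [Cpt, mem_insert, mem_image, mem_product, Prod.exists] at hP
    rcases hP with rfl | ⟨P₁, P₂, ⟨h₁, h₂⟩, rfl⟩
    · simp only [mem_singleton] at hs
      subst hs
      omega
    · rcases mem_union.mp hs with h | h
      · have := Cpt_bounds P₁ h₁ s h; omega
      · have := Cpt_bounds P₂ h₂ s h; omega

lemma Cpt_nonempty : ∀ {d t : ℕ}, ∀ P ∈ Cpt d t, P.Nonempty
  | 0, t, P, hP => by simp_all [Cpt]
  | d + 1, t, P, hP => by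
    simp only [Cpt, mem_insert, mem_image, mem_product, Prod.exists] at hP
    rcases hP with rfl | ⟨P₁, P₂, ⟨h₁, -⟩, rfl⟩
    · exact singleton_nonempty _
    · exact (Cpt_nonempty P₁ h₁).mono subset_union_left

variable {d t : ℕ} {P₁ P₂ : Finset (ℕ × ℕ)}

lemma filter_union_Cpt_left (h₁ : P₁ ∈ Cpt d t) (h₂ : P₂ ∈ Cpt d (t + 2 ^ d)) :
    (P₁ ∪ P₂).filter (fun s => s.2 < t + 2 ^ d) = P₁ := by
  ext s
  simp only [mem_filter, mem_union]
  constructor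
  · rintro ⟨h | h, hlt⟩
    · exact h
    · have := Cpt_bounds P₂ h₂ s h; omega
  · intro h
    have := Cpt_bounds P₁ h₁ s h
    have : 1 ≤ 2 ^ d := Nat.one_le_two_pow
    exact ⟨Or.inl h, by omega⟩

lemma filter_union_Cpt_right (h₁ : P₁ ∈ Cpt d t) (h₂ : P₂ ∈ Cpt d (t + 2 ^ d)) :
    (P₁ ∪ P₂).filter (fun s => t + 2 ^ d ≤ s.1) = P₂ := by
  ext s
  simp only [mem_filter, mem_union]
  constructor
  · rintro ⟨h | h, hle⟩
    · have := Cpt_bounds P₁ h₁ s h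
      have : 1 ≤ 2 ^ d := Nat.one_le_two_pow
      omega
    · exact h
  · intro h
    exact ⟨Or.inr h, (Cpt_bounds P₂ h₂ s h).1⟩

lemma disjoint_of_mem_Cpt (h₁ : P₁ ∈ Cpt d t) (h₂ : P₂ ∈ Cpt d (t + 2 ^ d)) :
    Disjoint P₁ P₂ := by
  refine disjoint_left.mpr fun s hs₁ hs₂ => ?_
  have := Cpt_bounds P₁ h₁ s hs₁
  have := Cpt_bounds P₂ h₂ s hs₂
  have : 1 ≤ 2 ^ d := Nat.one_le_two_pow
  omega

lemma union_ne_singleton_of_mem_Cpt (h₁ : P₁ ∈ Cpt d t) :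
    P₁ ∪ P₂ ≠ {(t, t + 2 ^ (d + 1) - 1)} := by
  intro h
  obtain ⟨s, hs⟩ := Cpt_nonempty P₁ h₁
  have hmem : s ∈ P₁ ∪ P₂ := mem_union_left _ hs
  rw [h, mem_singleton] at hmem
  have := Cpt_bounds P₁ h₁ s hs
  have : 1 ≤ 2 ^ d := Nat.one_le_two_pow
  have : 2 ^ (d + 1) = 2 ^ d + 2 ^ d := by ring
  subst hmem
  omega

lemma Gam_union (h₁ : P₁ ∈ Cpt d t) (h₂ : P₂ ∈ Cpt d (t + 2 ^ d)) :
    Gam (d + 1) t (P₁ ∪ P₂) = Gam d t P₁ + Gam d (t + 2 ^ d) P₂ + 1 := by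
  rw [Gam, if_neg (union_ne_singleton_of_mem_Cpt h₁), filter_union_Cpt_left h₁ h₂,
    filter_union_Cpt_right h₁ h₂]

lemma sum_Cpt_succ (d t : ℕ) (F : Finset (ℕ × ℕ) → ℝ) :
    ∑ P ∈ Cpt (d + 1) t, (2 : ℝ) ^ (-(Gam (d + 1) t P : ℤ)) * F P =
      2⁻¹ * F {(t, t + 2 ^ (d + 1) - 1)} +
        2⁻¹ * ∑ P₁ ∈ Cpt d t, ∑ P₂ ∈ Cpt d (t + 2 ^ d),
          (2 : ℝ) ^ (-(Gam d t P₁ : ℤ)) * (2 : ℝ) ^ (-(Gam d (t + 2 ^ d) P₂ : ℤ)) *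
            F (P₁ ∪ P₂) := by
  have hnotmem : ({(t, t + 2 ^ (d + 1) - 1)} : Finset (ℕ × ℕ)) ∉
      (Cpt d t ×ˢ Cpt d (t + 2 ^ d)).image fun p => p.1 ∪ p.2 := by
    simp only [mem_image, mem_product, Prod.exists, not_exists, not_and, and_imp]
    exact fun _ _ h₁ _ => union_ne_singleton_of_mem_Cpt h₁
  have hinj : Set.InjOn (fun p : Finset (ℕ × ℕ) × Finset (ℕ × ℕ) => p.1 ∪ p.2)
      (Cpt d t ×ˢ Cpt d (t + 2 ^ d) : Finset _) := by
    rintro ⟨P₁, P₂⟩ hP ⟨Q₁, Q₂⟩ hQ h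
    simp only [coe_product, Set.mem_prod, mem_coe] at hP hQ h
    refine Prod.ext ?_ ?_
    · rw [← filter_union_Cpt_left hP.1 hP.2, h, filter_union_Cpt_left hQ.1 hQ.2]
    · rw [← filter_union_Cpt_right hP.1 hP.2, h, filter_union_Cpt_right hQ.1 hQ.2]
  have hsingle : Gam (d + 1) t {(t, t + 2 ^ (d + 1) - 1)} = 1 := by rw [Gam, if_pos rfl]
  rw [Cpt, sum_insert hnotmem, sum_image hinj, sum_product, hsingle, mul_sum]
  congr 1
  · norm_num
  refine sum_congr rfl fun P₁ h₁ => ?_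
  rw [mul_sum]
  refine sum_congr rfl fun P₂ h₂ => ?_
  rw [Gam_union h₁ h₂]
  push_cast
  simp only [neg_add, zpow_add₀ (two_ne_zero' ℝ), zpow_neg_one]
  ring

lemma sum_Cpt_two_zpow_neg_Gam (d t : ℕ) :
    ∑ P ∈ Cpt d t, (2 : ℝ) ^ (-(Gam d t P : ℤ)) = 1 := by
  induction d generalizing t with
  | zero => simp [Cpt, Gam]
  | succ d ih =>
    have h := sum_Cpt_succ d t fun _ => 1
    simp only [mul_one] at h
    simp only [h, ← mul_sum, ih, mul_one]
    norm_num

end Partitions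

section Segments

variable {𝒳 : Type*} {x : ℕ → 𝒳} {n a b : ℕ}

lemma seg_eq_take {m : ℕ} (h : m ≤ n) : seg x m a b = (seg x n a b).take (min b m + 1 - a) := by
  rw [seg, seg, ← List.map_take, List.take_range]
  congr 2
  omega

lemma seg_eq_nil (h : n < a) : seg x n a b = [] := by
  simp [seg, show min b n + 1 - a = 0 by omega]

lemma seg_congr_right {b' : ℕ} (h : n ≤ b) (h' : n ≤ b') : seg x n a b = seg x n a b' := by
  rw [seg, seg, min_eq_right h, min_eq_right h']

end Segments

namespace IsSource

variable {𝒳 : Type*} [Fintype 𝒳] {ρ : List 𝒳 → ℝ}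

lemma nonneg (hρ : IsSource ρ) (l : List 𝒳) : 0 ≤ ρ l := (hρ.2.2 l).1

lemma apply_append_le (hρ : IsSource ρ) (l l' : List 𝒳) : ρ (l ++ l') ≤ ρ l := by
  induction l' using List.reverseRecOn with
  | nil => simp
  | append_singleton l' y ih =>
    calc ρ (l ++ (l' ++ [y])) = ρ (l ++ l' ++ [y]) := by rw [List.append_assoc]
      _ ≤ ∑ z : 𝒳, ρ (l ++ l' ++ [z]) :=
        single_le_sum (f := fun z => ρ (l ++ l' ++ [z])) (fun _ _ => hρ.nonneg _) (mem_univ y)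
      _ = ρ (l ++ l') := (hρ.2.1 _).symm
      _ ≤ ρ l := ih

lemma apply_le_apply_take (hρ : IsSource ρ) (l : List 𝒳) (k : ℕ) : ρ l ≤ ρ (l.take k) := by
  conv_lhs => rw [← List.take_append_drop k l]
  exact hρ.apply_append_le _ _

lemma apply_seg_antitone (hρ : IsSource ρ) (x : ℕ → 𝒳) (a b : ℕ) :
    Antitone fun n => ρ (seg x n a b) := fun _ _ h => by
  dsimp only
  rw [seg_eq_take h]
  exact hρ.apply_le_apply_take _ _

end IsSource

/-- `PTW_d` over the block `{t, …, t + 2^d - 1}`, i.e. with the partitions `𝒞_d(t)`. -/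
noncomputable def PTWFrom {𝒳 : Type*} (ρ : List 𝒳 → ℝ) (d t : ℕ) (x : ℕ → 𝒳) (n : ℕ) : ℝ :=
  ∑ P ∈ Cpt d t, (2 : ℝ) ^ (-(Gam d t P : ℤ)) * ∏ s ∈ P, ρ (seg x n s.1 s.2)

section PTWFrom

variable {𝒳 : Type*} {ρ : List 𝒳 → ℝ} {x : ℕ → 𝒳} {n : ℕ}

lemma PTW_eq_PTWFrom (d : ℕ) : PTW ρ d x n = PTWFrom ρ d 1 x n := rfl

lemma PTWFrom_zero (t : ℕ) : PTWFrom ρ 0 t x n = ρ (seg x n t t) := by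
  simp [PTWFrom, Cpt, Gam]

lemma PTWFrom_succ (d t : ℕ) :
    PTWFrom ρ (d + 1) t x n = 2⁻¹ * ρ (seg x n t (t + 2 ^ (d + 1) - 1)) +
      2⁻¹ * (PTWFrom ρ d t x n * PTWFrom ρ d (t + 2 ^ d) x n) := by
  rw [PTWFrom, sum_Cpt_succ, PTWFrom, PTWFrom, sum_mul_sum, prod_singleton]
  congr 2
  refine sum_congr rfl fun P₁ h₁ => sum_congr rfl fun P₂ h₂ => ?_
  rw [prod_union (disjoint_of_mem_Cpt h₁ h₂)]
  ring

variable [Fintype 𝒳] (hρ : IsSource ρ)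
include hρ

lemma PTWFrom_nonneg (d t : ℕ) : 0 ≤ PTWFrom ρ d t x n :=
  sum_nonneg fun _ _ => mul_nonneg (by positivity) (prod_nonneg fun _ _ => hρ.nonneg _)

lemma PTWFrom_antitone (d t : ℕ) : Antitone (PTWFrom ρ d t x) := fun _ _ h =>
  sum_le_sum fun _ _ => mul_le_mul_of_nonneg_left
    (prod_le_prod (fun _ _ => hρ.nonneg _) fun s _ => hρ.apply_seg_antitone x s.1 s.2 h)
    (by positivity)

lemma PTWFrom_of_lt {d t : ℕ} (h : n < t) : PTWFrom ρ d t x n = 1 := by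
  have hempty : ∀ P ∈ Cpt d t, ∏ s ∈ P, ρ (seg x n s.1 s.2) = 1 := fun P hP =>
    prod_eq_one fun s hs => by
      rw [seg_eq_nil (Nat.lt_of_lt_of_le h (Cpt_bounds P hP s hs).1)]
      exact hρ.1
  rw [PTWFrom, sum_congr rfl fun P hP => by rw [hempty P hP, mul_one],
    sum_Cpt_two_zpow_neg_Gam]

lemma half_mul_le_PTWFrom (d t : ℕ) :
    2⁻¹ * ρ (seg x n t (t + 2 ^ d - 1)) ≤ PTWFrom ρ d t x n := by
  cases d with
  | zero =>
    rw [PTWFrom_zero, pow_zero, Nat.add_sub_cancel]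
    linarith [hρ.nonneg (seg x n t t)]
  | succ d =>
    rw [PTWFrom_succ]
    have := mul_nonneg (PTWFrom_nonneg (x := x) (n := n) hρ d t)
      (PTWFrom_nonneg (x := x) (n := n) hρ d (t + 2 ^ d))
    linarith

end PTWFrom

lemma Nat.clog_succ_le_clog_add_one {b : ℕ} (hb : 1 < b) (n : ℕ) :
    Nat.clog b (n + 1) ≤ Nat.clog b n + 1 := by
  refine Nat.clog_le_of_le_pow ?_
  have := Nat.le_pow_clog hb n
  have := Nat.one_le_pow (Nat.clog b n) b (by omega)
  rw [pow_succ]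
  nlinarith

section Depth

variable {𝒳 : Type*} [Fintype 𝒳] {ρ : List 𝒳 → ℝ} (hρ : IsSource ρ) {x : ℕ → 𝒳} {n : ℕ}
include hρ

lemma PTW_succ_of_le {d : ℕ} (h : n ≤ 2 ^ d) :
    PTW ρ (d + 1) x n = 2⁻¹ * ρ (seg x n 1 (1 + 2 ^ d - 1)) + 2⁻¹ * PTW ρ d x n := by
  have : 2 ^ (d + 1) = 2 ^ d + 2 ^ d := by ring
  rw [PTW_eq_PTWFrom, PTWFrom_succ, PTWFrom_of_lt hρ (show n < 1 + 2 ^ d by omega), mul_one,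
    ← PTW_eq_PTWFrom, seg_congr_right (b' := 1 + 2 ^ d - 1) (by omega) (by omega)]

lemma PTW_succ_le_of_le {d : ℕ} (h : n ≤ 2 ^ d) :
    PTW ρ (d + 1) x n ≤ 3 / 2 * PTW ρ d x n := by
  rw [PTW_succ_of_le hρ h, PTW_eq_PTWFrom]
  linarith [half_mul_le_PTWFrom (x := x) (n := n) hρ d 1]

lemma pow_clog_succ_mul_PTW_le (n : ℕ) :
    (2 / 3 : ℝ) ^ Nat.clog 2 (n + 1) * PTW ρ (Nat.clog 2 (n + 1)) x n ≤
      (2 / 3 : ℝ) ^ Nat.clog 2 n * PTW ρ (Nat.clog 2 n) x n := by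
  rcases (Nat.clog_mono_right 2 n.le_succ).eq_or_lt with h | h
  · rw [h]
  · rw [show Nat.clog 2 (n + 1) = Nat.clog 2 n + 1 by linarith [Nat.clog_succ_le_clog_add_one one_lt_two n],
      pow_succ, mul_assoc]
    gcongr
    linarith [PTW_succ_le_of_le (x := x) hρ (Nat.le_pow_clog one_lt_two n)]

end Depth

lemma PTWad_succ {𝒳 : Type*} (ρ : List 𝒳 → ℝ) (x : ℕ → 𝒳) (n : ℕ) :
    PTWad ρ x (n + 1) =
      PTWad ρ x n * (PTW ρ (Nat.clog 2 (n + 1)) x (n + 1) / PTW ρ (Nat.clog 2 (n + 1)) x n) := by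
  rw [PTWad, prod_Icc_succ_top (by omega), Nat.add_sub_cancel, PTWad]

lemma mul_le_mul_div_of_le {b c p q : ℝ} (hq : 0 ≤ q) (hqp : q ≤ p) (h : c * p ≤ b) :
    c * q ≤ b * (q / p) := by
  rcases hq.trans hqp |>.eq_or_lt with hp | hp
  · simp [← hp, le_antisymm (hp ▸ hqp) hq]
  · calc c * q = c * p * (q / p) := by field_simp
      _ ≤ b * (q / p) := by gcongr

lemma pow_clog_mul_PTW_le_PTWad {𝒳 : Type*} [Fintype 𝒳] {ρ : List 𝒳 → ℝ} (hρ : IsSource ρ)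
    (x : ℕ → 𝒳) (n : ℕ) :
    (2 / 3 : ℝ) ^ Nat.clog 2 n * PTW ρ (Nat.clog 2 n) x n ≤ PTWad ρ x n := by
  induction n with
  | zero => simp [PTWad, PTW_eq_PTWFrom, PTWFrom_of_lt hρ]
  | succ n ih =>
    rw [PTWad_succ]
    exact mul_le_mul_div_of_le (PTWFrom_nonneg hρ _ _) (PTWFrom_antitone hρ _ _ n.le_succ)
      ((pow_clog_succ_mul_PTW_le hρ n).trans ih)

theorem ptw_strongly_online_general {𝒳 : Type*} [Fintype 𝒳]
    (ρ : List 𝒳 → ℝ) (hρ : IsSource ρ)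
    (n : ℕ) (x : ℕ → 𝒳)
    (hpos : 0 < PTW ρ (Nat.clog 2 n) x n) :
    -Real.logb 2 (PTWad ρ x n) ≤
      -Real.logb 2 (PTW ρ (Nat.clog 2 n) x n)
        + (Nat.clog 2 n : ℝ) * (Real.logb 2 3 - 1) := by
  set D := Nat.clog 2 n
  have hlower := pow_clog_mul_PTW_le_PTWad hρ x n
  have hscaled : 0 < (2 / 3 : ℝ) ^ D * PTW ρ D x n := by positivity
  have hlog := (Real.logb_le_logb one_lt_two hscaled (hscaled.trans_le hlower)).mpr hlower
  rw [Real.logb_mul (by positivity) hpos.ne', Real.logb_pow, Real.logb_div two_ne_zero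
    three_ne_zero, Real.logb_self_eq_one one_lt_two] at hlog
  linarith

/-- **Theorem 2.** For all `n ≥ 1` and all `x_{1:n} ∈ 𝒳ⁿ` such that
`PTW_d(x_{1:n}) > 0` where `d = ⌈log₂ n⌉`, the depth-adaptive mixture satisfies
`-log₂ PTW(x_{1:n}) ≤ -log₂ PTW_d(x_{1:n}) + ⌈log₂ n⌉·(log₂ 3 - 1)`. -/
theorem ptw_strongly_online {𝒳 : Type*} [Fintype 𝒳] [Nonempty 𝒳]
    (ρ : List 𝒳 → ℝ) (hρ : IsSource ρ)
    (n : ℕ) (hn : 1 ≤ n) (x : ℕ → 𝒳)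
    (hpos : 0 < PTW ρ (Nat.clog 2 n) x n) :
    -Real.logb 2 (PTWad ρ x n) ≤
      -Real.logb 2 (PTW ρ (Nat.clog 2 n) x n)
        + (Nat.clog 2 n : ℝ) * (Real.logb 2 3 - 1) :=
  ptw_strongly_online_general ρ hρ n x hpos
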